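/- arXiv:2109.13991 — 3 statements merged into one kernel-verified Lean document; each statement's English description precedes it below -/
import Mathlib

section
/- Let X be a topological space. For an open subset U of X, call a sieve on U a collection S of open subsets of U that is downward closed (if V ∈ S and W ⊆ V is open, then W ∈ S). Then the assignment J sending each open subset U of X to the set of sieves S on U satisfying: for every compact subset K of X there exist finitely many members V₁, …, Vₙ of S with K ∩ U = K ∩ (V₁ ∪ ⋯ ∪ Vₙ), defines a Grothendieck topology on the poset of open subsets of X. Explicitly: (i) the maximal sieve {V open : V ⊆ U} belongs to J(U); (ii) if S ∈ J(U) and W ⊆ U is open, then the pullback sieve {V open : V ⊆ W and V ∈ S} belongs to J(W); (iii) if S ∈ J(U) and R is a sieve on U such that for every V ∈ S the pullback sieve {W open : W ⊆ V and W ∈ R} belongs to J(V), then R ∈ J(U). -/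
/-- A sieve on an open subset `U` of a topological space: a collection of open
subsets of `U` that is downward closed under open subsets. -/
def IsOpenSieve {X : Type*} [TopologicalSpace X] (U : Set X) (S : Set (Set X)) : Prop :=
  (∀ V ∈ S, IsOpen V ∧ V ⊆ U) ∧
  ∀ V ∈ S, ∀ W : Set X, IsOpen W → W ⊆ V → W ∈ S

/-- The covering condition: for every compact `K ⊆ X` there are finitely many
members of `S` whose union agrees with `U` on `K`. -/
def CfCondition {X : Type*} [TopologicalSpace X] (U : Set X) (S : Set (Set X)) : Prop :=
  ∀ K : Set X, IsCompact K → ∃ T : Set (Set X),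
    T ⊆ S ∧ T.Finite ∧ K ∩ U = K ∩ ⋃₀ T

/-- The assignment sending each open `U ⊆ X` to the set of sieves on `U`
satisfying the compact-finite covering condition defines a Grothendieck topology
on the poset of open subsets of `X`: (i) the maximal sieve covers; (ii) covering
sieves pull back to covering sieves; (iii) local character. -/
theorem cf_grothendieck_topology {X : Type*} [TopologicalSpace X] :
    (∀ U : Set X, IsOpen U →
      CfCondition U {V : Set X | IsOpen V ∧ V ⊆ U}) ∧
    (∀ U : Set X, IsOpen U → ∀ S : Set (Set X), IsOpenSieve U S → CfCondition U S →
      ∀ W : Set X, IsOpen W → W ⊆ U →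
        CfCondition W {V : Set X | IsOpen V ∧ V ⊆ W ∧ V ∈ S}) ∧
    (∀ U : Set X, IsOpen U → ∀ S R : Set (Set X),
      IsOpenSieve U S → IsOpenSieve U R → CfCondition U S →
      (∀ V ∈ S, CfCondition V {W : Set X | IsOpen W ∧ W ⊆ V ∧ W ∈ R}) →
      CfCondition U R) := by
  refine ⟨?_, ?_, ?_⟩
  · intro U hU K _
    exact ⟨{U}, fun V hV => by simp_all, Set.finite_singleton U, by simp⟩
  · intro U hU S hS hcov W hW hWU K hK
    obtain ⟨T, hTS, hTfin, hTeq⟩ := hcov K hK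
    refine ⟨(fun V => V ∩ W) '' T, ?_, hTfin.image _, ?_⟩
    · rintro _ ⟨V, hV, rfl⟩
      have hVo := (hS.1 V (hTS hV)).1
      exact ⟨hVo.inter hW, Set.inter_subset_right,
        hS.2 V (hTS hV) _ (hVo.inter hW) Set.inter_subset_left⟩
    · have : ⋃₀ ((fun V => V ∩ W) '' T) = (⋃₀ T) ∩ W := by
        ext x; simp [Set.mem_sUnion]; tauto
      rw [this, ← Set.inter_assoc, ← hTeq, Set.inter_assoc,
        Set.inter_eq_right.mpr hWU]
  · intro U hU S R hS hR hcov hloc K hK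
    obtain ⟨T, hTS, hTfin, hTeq⟩ := hcov K hK
    choose F hF1 hF2 hF3 using fun V (hV : V ∈ T) => hloc V (hTS hV) K hK
    refine ⟨⋃ V ∈ T, F V ‹_›, ?_, ?_, ?_⟩
    · rintro W hW
      simp only [Set.mem_iUnion] at hW
      obtain ⟨V, hV, hWV⟩ := hW
      exact (hF1 V hV hWV).2.2
    · exact hTfin.biUnion' fun V hV => hF2 V hV
    · apply Set.Subset.antisymm
      · intro x hx
        have hxT : x ∈ K ∩ ⋃₀ T := hTeq ▸ hx
        obtain ⟨hxK, hxs⟩ := hxT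
        obtain ⟨V, hV, hxV⟩ := hxs
        have hx2 : x ∈ K ∩ ⋃₀ F V hV := (hF3 V hV) ▸ Set.mem_inter hxK hxV
        obtain ⟨-, hxs2⟩ := hx2
        obtain ⟨W, hW, hxW⟩ := hxs2
        exact ⟨hxK, W, Set.mem_iUnion.mpr ⟨V, Set.mem_iUnion.mpr ⟨hV, hW⟩⟩, hxW⟩
      · rintro x ⟨hxK, W, hW, hxW⟩
        simp only [Set.mem_iUnion] at hW
        obtain ⟨V, hV, hWF⟩ := hW
        have hWsub := (hF1 V hV hWF).2.1
        have hVU := (hS.1 V (hTS hV)).2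
        exact ⟨hxK, hVU (hWsub hxW)⟩
end

section
/- Let X be a topological space and U an open subset of X. Suppose S₁ is a cf-covering of U, and S₂ is a family of open subsets of U such that for every V ∈ S₁ the family {V ∩ W : W ∈ S₂} is a cf-covering of V. Then S₂ is a cf-covering of U. -/
/-- `S` is a cf-covering of the open set `U`: it is a family of open subsets of
`U` such that for every compact `K ⊆ X` there is a finite subfamily `T ⊆ S`
with `K ∩ U = K ∩ ⋃₀ T`. -/
def IsCfCovering {X : Type*} [TopologicalSpace X] (U : Set X) (S : Set (Set X)) : Prop :=
  (∀ V ∈ S, IsOpen V ∧ V ⊆ U) ∧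
  ∀ K : Set X, IsCompact K → ∃ T : Set (Set X),
    T ⊆ S ∧ T.Finite ∧ K ∩ U = K ∩ ⋃₀ T

/-- Local character: if `S₁` is a cf-covering of `U` and `S₂` is a family of
open subsets of `U` such that `{V ∩ W : W ∈ S₂}` is a cf-covering of `V` for
every `V ∈ S₁`, then `S₂` is a cf-covering of `U`. -/
theorem cf_covering_local_character {X : Type*} [TopologicalSpace X]
    (U : Set X) (hU : IsOpen U) (S₁ S₂ : Set (Set X))
    (h₁ : IsCfCovering U S₁)
    (hS₂ : ∀ V ∈ S₂, IsOpen V ∧ V ⊆ U)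
    (h₂ : ∀ V ∈ S₁, IsCfCovering V ((fun W => V ∩ W) '' S₂)) :
    IsCfCovering U S₂ := by
  obtain ⟨h₁o, h₁c⟩ := h₁
  refine ⟨hS₂, ?_⟩
  intro K hK
  obtain ⟨T₁, hT₁S, hT₁fin, hT₁eq⟩ := h₁c K hK
  have claim : ∀ V ∈ T₁, ∃ T, T ⊆ S₂ ∧ T.Finite ∧ K ∩ V ⊆ ⋃₀ T := by
    intro V hV
    obtain ⟨T', hT'sub, hT'fin, hT'eq⟩ := (h₂ V (hT₁S hV)).2 K hK
    have hch : ∀ A : Set X, ∃ W : Set X, A ∈ T' → W ∈ S₂ ∧ V ∩ W = A := by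
      intro A
      by_cases hA : A ∈ T'
      · obtain ⟨W, hW, hWA⟩ := hT'sub hA
        exact ⟨W, fun _ => ⟨hW, hWA⟩⟩
      · exact ⟨∅, fun h => absurd h hA⟩
    choose w hw using hch
    refine ⟨w '' T', ?_, hT'fin.image w, ?_⟩
    · rintro _ ⟨A, hA, rfl⟩
      exact (hw A hA).1
    · intro x hx
      have : x ∈ K ∩ ⋃₀ T' := hT'eq ▸ hx
      obtain ⟨A, hA, hxA⟩ := this.2
      refine ⟨w A, ⟨A, hA, rfl⟩, ?_⟩
      have := (hw A hA).2
      rw [← this] at hxA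
      exact hxA.2
  choose F hF1 hF2 hF3 using claim
  refine ⟨⋃ (V : Set X) (hV : V ∈ T₁), F V hV, ?_, ?_, ?_⟩
  · intro W hW
    simp only [Set.mem_iUnion] at hW
    obtain ⟨V, hV, hWV⟩ := hW
    exact hF1 V hV hWV
  · exact Set.Finite.biUnion' hT₁fin hF2
  · apply Set.Subset.antisymm
    · intro x hx
      have hx1 : x ∈ K ∩ ⋃₀ T₁ := hT₁eq ▸ hx
      obtain ⟨V, hV, hxV⟩ := hx1.2
      have := hF3 V hV ⟨hx.1, hxV⟩
      obtain ⟨W, hW, hxW⟩ := this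
      exact ⟨hx.1, Set.mem_sUnion.mpr ⟨W, Set.mem_iUnion.mpr ⟨V, Set.mem_iUnion.mpr ⟨hV, hW⟩⟩, hxW⟩⟩
    · intro x hx
      obtain ⟨W, hW, hxW⟩ := hx.2
      simp only [Set.mem_iUnion] at hW
      obtain ⟨V, hV, hWV⟩ := hW
      exact ⟨hx.1, (hS₂ W (hF1 V hV hWV)).2 hxW⟩
end

section
/- Let X be a topological space. Consider the poset of relatively compact open subsets of X (open subsets whose closure in X is compact). For a relatively compact open subset U of X, call a sieve on U a collection S of relatively compact open subsets of U that is downward closed within relatively compact opens (if V ∈ S and W ⊆ V is a relatively compact open subset, then W ∈ S). Then the assignment J sending each relatively compact open subset U of X to the set of sieves S on U satisfying: for every compact subset K of X there exist finitely many members V₁, …, Vₙ of S with K ∩ U = K ∩ (V₁ ∪ ⋯ ∪ Vₙ), defines a Grothendieck topology on the poset of relatively compact open subsets of X. Explicitly: (i) the maximal sieve on U belongs to J(U); (ii) if S ∈ J(U) and W ⊆ U is a relatively compact open subset, then the pullback sieve {V : V ⊆ W and V ∈ S} belongs to J(W); (iii) if S ∈ J(U) and R is a sieve on U such that for every V ∈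 S the pullback sieve {W : W ⊆ V and W ∈ R} belongs to J(V), then R ∈ J(U). -/
/-- A sieve on a relatively compact open subset `U` of a topological space: a
collection of relatively compact open subsets of `U` that is downward closed
within relatively compact opens. -/
def IsRelCompactSieve {X : Type*} [TopologicalSpace X] (U : Set X) (S : Set (Set X)) : Prop :=
  (∀ V ∈ S, IsOpen V ∧ IsCompact (closure V) ∧ V ⊆ U) ∧
  ∀ V ∈ S, ∀ W : Set X, IsOpen W → IsCompact (closure W) → W ⊆ V → W ∈ S

/-- The assignment sending each relatively compact open `U ⊆ X` to the set of
sieves on `U` satisfying the compact-finite covering condition defines a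
Grothendieck topology on the poset of relatively compact open subsets of `X`:
(i) the maximal sieve covers; (ii) covering sieves pull back to covering
sieves; (iii) local character. -/
theorem cf_grothendieck_topology_relatively_compact {X : Type*} [TopologicalSpace X] :
    (∀ U : Set X, IsOpen U → IsCompact (closure U) →
      CfCondition U {V : Set X | IsOpen V ∧ IsCompact (closure V) ∧ V ⊆ U}) ∧
    (∀ U : Set X, IsOpen U → IsCompact (closure U) →
      ∀ S : Set (Set X), IsRelCompactSieve U S → CfCondition U S →
      ∀ W : Set X, IsOpen W → IsCompact (closure W) → W ⊆ U →
        CfCondition W {V : Set X | V ⊆ W ∧ V ∈ S}) ∧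
    (∀ U : Set X, IsOpen U → IsCompact (closure U) →
      ∀ S R : Set (Set X),
      IsRelCompactSieve U S → IsRelCompactSieve U R → CfCondition U S →
      (∀ V ∈ S, CfCondition V {W : Set X | W ⊆ V ∧ W ∈ R}) →
      CfCondition U R) := by
  refine ⟨?_, ?_, ?_⟩
  · intro U hU hUc K _
    exact ⟨{U}, by simp [Set.singleton_subset_iff, hU, hUc], Set.finite_singleton U, by simp⟩
  · intro U hU hUc S hS hScf W hW hWc hWU K hK
    obtain ⟨T, hTS, hTfin, hTK⟩ := hScf K hK
    refine ⟨(· ∩ W) '' T, ?_, hTfin.image _, ?_⟩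
    · rintro _ ⟨V, hV, rfl⟩
      refine ⟨Set.inter_subset_right, hS.2 V (hTS hV) _ ((hS.1 V (hTS hV)).1.inter hW)
        (hWc.of_isClosed_subset isClosed_closure (closure_mono Set.inter_subset_right))
        Set.inter_subset_left⟩
    · ext x
      have h := Set.ext_iff.mp hTK x
      simp only [Set.mem_inter_iff, Set.mem_sUnion, Set.mem_image] at *
      constructor
      · rintro ⟨hxK, hxW⟩
        obtain ⟨t, ht, hxt⟩ := (h.mp ⟨hxK, hWU hxW⟩).2
        exact ⟨hxK, _, ⟨t, ht, rfl⟩, hxt, hxW⟩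
      · rintro ⟨hxK, _, ⟨t, ht, rfl⟩, hxt, hxW⟩
        exact ⟨hxK, hxW⟩
  · intro U hU hUc S R hS hR hScf hloc K hK
    obtain ⟨T, hTS, hTfin, hTK⟩ := hScf K hK
    have h : ∀ v : T, ∃ Tv : Set (Set X), Tv ⊆ {W : Set X | W ⊆ (v : Set X) ∧ W ∈ R} ∧
        Tv.Finite ∧ K ∩ (v : Set X) = K ∩ ⋃₀ Tv :=
      fun v => hloc v (hTS v.2) K hK
    choose F hF1 hF2 hF3 using h
    haveI := hTfin.to_subtype
    refine ⟨⋃ v : T, F v, ?_, Set.finite_iUnion hF2, ?_⟩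
    · intro W hW
      obtain ⟨v, hWv⟩ := Set.mem_iUnion.mp hW
      exact (hF1 v hWv).2
    · rw [hTK, Set.sUnion_eq_iUnion, Set.sUnion_iUnion, Set.inter_iUnion, Set.inter_iUnion]
      exact Set.iUnion_congr fun v => hF3 v
end
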